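/- arXiv:2305.01638 — 2 statements merged into one kernel-verified Lean document; each statement's English description precedes it below -/
import Mathlib

section
/- If f : [0,1) → ℝ is continuous and a_{j,k} = 2^{j/2} ∫_{k/2^j}^{(k+1)/2^j} f(t) dt, then the approximants f̂^{(j)}(t) = Σ_{k=0}^{2^j−1} a_{j,k} φ_{j,k}(t) converge to f uniformly on [0,1) as j → ∞, assuming f extends continuously to [0,1]. -/
open MeasureTheory

noncomputable def haarPhi (t : ℝ) : ℝ := if 0 ≤ t ∧ t < 1 then 1 else 0

noncomputable def phiJK (j : ℕ) (k : ℤ) (t : ℝ) : ℝ :=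
  2 ^ ((j : ℝ) / 2) * haarPhi (2 ^ j * t - k)

/-!
On `[0,1)` the approximant `f̂⁽ʲ⁾(t)` is the mean of `f` over the dyadic interval of length
`2⁻ʲ` containing `t`, since exactly one `φ_{j,k}` is nonzero at `t` and
`2^{j/2} · 2^{j/2} = 2ʲ` is the reciprocal length. By uniform continuity of `f` on `[0,1]`,
such means are uniformly close to `f(t)` once `2⁻ʲ` is small.
-/

open Set Filter Topology

theorem haarPhi_sub_natCast {x : ℝ} (hx : 0 ≤ x) (k : ℕ) :
    haarPhi (x - k) = if ⌊x⌋₊ = k then 1 else 0 := by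
  simp only [haarPhi, Nat.floor_eq_iff hx, sub_nonneg, sub_lt_iff_lt_add']

theorem rpow_div_two_mul_self (j : ℕ) :
    (2 : ℝ) ^ ((j : ℝ) / 2) * 2 ^ ((j : ℝ) / 2) = 2 ^ j := by
  rw [← Real.rpow_add two_pos, add_halves, Real.rpow_natCast]

theorem mem_Ico_natFloor_mul_div {c t : ℝ} (hc : 0 < c) (ht : 0 ≤ t) :
    t ∈ Ico (⌊c * t⌋₊ / c) ((⌊c * t⌋₊ + 1) / c) := by
  rw [mem_Ico, div_le_iff₀' hc, lt_div_iff₀' hc]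
  exact ⟨Nat.floor_le (by positivity), Nat.lt_floor_add_one _⟩

theorem natFloor_two_pow_mul_lt {j : ℕ} {t : ℝ} (ht : t ∈ Ico (0 : ℝ) 1) :
    ⌊(2 : ℝ) ^ j * t⌋₊ < 2 ^ j := by
  rw [Nat.floor_lt (by positivity [ht.1])]
  push_cast
  nlinarith [ht.2, pow_pos (two_pos (α := ℝ)) j]

theorem Icc_natFloor_two_pow_mul_div_subset {j : ℕ} {t : ℝ} (ht : t ∈ Ico (0 : ℝ) 1) :
    Icc ((⌊(2 : ℝ) ^ j * t⌋₊ : ℝ) / 2 ^ j) ((⌊(2 : ℝ) ^ j * t⌋₊ + 1) / 2 ^ j) ⊆ Icc 0 1 := by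
  have hn : ⌊(2 : ℝ) ^ j * t⌋₊ + 1 ≤ 2 ^ j := natFloor_two_pow_mul_lt ht
  exact Icc_subset_Icc (by positivity) ((div_le_one (by positivity)).2 (by exact_mod_cast hn))

theorem sum_range_mul_phiJK (c : ℕ → ℝ) {j : ℕ} {t : ℝ} (ht : t ∈ Ico (0 : ℝ) 1) :
    ∑ k ∈ Finset.range (2 ^ j), c k * phiJK j k t = 2 ^ ((j : ℝ) / 2) * c ⌊2 ^ j * t⌋₊ := by
  have hx : (0 : ℝ) ≤ 2 ^ j * t := by positivity [ht.1]
  rw [Finset.sum_eq_single_of_mem _ (Finset.mem_range.2 (natFloor_two_pow_mul_lt ht))]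
  · rw [phiJK, Int.cast_natCast, haarPhi_sub_natCast hx, if_pos rfl, mul_one, mul_comm]
  · intro k _ hk
    rw [phiJK, Int.cast_natCast, haarPhi_sub_natCast hx, if_neg (Ne.symm hk), mul_zero, mul_zero]

theorem dist_inv_sub_mul_integral_le {f : ℝ → ℝ} {a b c ε : ℝ} (hab : a < b)
    (hf : IntervalIntegrable f volume a b) (hε : ∀ s ∈ Ioc a b, dist (f s) c ≤ ε) :
    dist ((b - a)⁻¹ * ∫ s in a..b, f s) c ≤ ε := by
  have hba : 0 < b - a := sub_pos.2 hab
  have hbound : ‖∫ s in a..b, (f s - c)‖ ≤ ε * |b - a| :=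
    intervalIntegral.norm_integral_le_of_norm_le_const fun s hs => by
      rw [← dist_eq_norm]
      exact hε s (uIoc_of_le hab.le ▸ hs)
  have hmean : ((b - a)⁻¹ * ∫ s in a..b, f s) - c = (b - a)⁻¹ * ∫ s in a..b, (f s - c) := by
    rw [intervalIntegral.integral_sub hf intervalIntegrable_const,
      intervalIntegral.integral_const, smul_eq_mul]
    field_simp
  rw [Real.dist_eq, hmean, abs_mul, abs_inv, abs_of_pos hba, inv_mul_le_iff₀ hba, mul_comm,
    ← abs_of_pos hba]
  exact hbound

/-- If `f` is continuous on `[0,1]` and `a_{j,k} = 2^{j/2} ∫_{k/2^j}^{(k+1)/2^j} f`,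
then the approximants `f̂⁽ʲ⁾ = Σ_{k<2^j} a_{j,k} φ_{j,k}` converge to `f` uniformly on
`[0,1)` as `j → ∞`. -/
theorem haar_projection_tendstoUniformly (f : ℝ → ℝ)
    (hf : ContinuousOn f (Set.Icc (0 : ℝ) 1)) :
    TendstoUniformlyOn
      (fun (j : ℕ) (t : ℝ) => ∑ k ∈ Finset.range (2 ^ j),
        (2 ^ ((j : ℝ) / 2) * ∫ s in ((k : ℝ) / 2 ^ j)..(((k : ℝ) + 1) / 2 ^ j), f s)
          * phiJK j (k : ℤ) t)
      f Filter.atTop (Set.Ico (0 : ℝ) 1) := by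
  rw [Metric.tendstoUniformlyOn_iff]
  intro ε hε
  obtain ⟨δ, hδ, hfδ⟩ := Metric.uniformContinuousOn_iff_le.1
    (isCompact_Icc.uniformContinuousOn_of_continuous hf) (ε / 2) (half_pos hε)
  have hsmall : ∀ᶠ j : ℕ in atTop, ((2 : ℝ) ^ j)⁻¹ < δ :=
    (tendsto_inv_atTop_zero.comp (tendsto_pow_atTop_atTop_of_one_lt one_lt_two)).eventually
      (gt_mem_nhds hδ)
  filter_upwards [hsmall] with j hj t ht
  rw [sum_range_mul_phiJK _ ht, ← mul_assoc, rpow_div_two_mul_self, dist_comm]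
  set n := ⌊(2 : ℝ) ^ j * t⌋₊
  have h2j : (0 : ℝ) < 2 ^ j := by positivity
  have hlen : ((n : ℝ) + 1) / 2 ^ j - n / 2 ^ j = (2 ^ j)⁻¹ := by ring
  have ht' := mem_Ico_natFloor_mul_div h2j ht.1
  have hsub := Icc_natFloor_two_pow_mul_div_subset (j := j) ht
  have hab : (n : ℝ) / 2 ^ j < (n + 1) / 2 ^ j := by gcongr; exact lt_add_one _
  have hmean := dist_inv_sub_mul_integral_le (c := f t) hab
    ((hf.mono hsub).intervalIntegrable_of_Icc hab.le) fun s hs =>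
      hfδ s (hsub (Ioc_subset_Icc_self hs)) t (hsub (Ico_subset_Icc_self ht'))
        ((Real.dist_le_of_mem_Icc (Ioc_subset_Icc_self hs) (Ico_subset_Icc_self ht')).trans
          (hlen.trans_lt hj).le)
  rw [hlen, inv_inv] at hmean
  exact hmean.trans_lt (half_lt_self hε)
end

section
/- Causality of the multiresolution convolution with left zero-padding: if the recursion a_j(n) = Σ_{k=0}^{K−1} ã_{j+1}(2n+k) h₀(k) uses left zero-padding (ã_{j+1} is a_{j+1} shifted right by the pad amount), then for two inputs x, x' ∈ ℝ^N agreeing on indices 0,…,t, the resulting memory vectors z_t (formed by the resolution-fading selection of the last coefficient at each level) agree; i.e., the output at time t depends only on x(0:t). -/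
/-- Dilated causal convolution with dilation `d` and a length-`K` filter `h`
(left zero-padding corresponds to evaluating the input at indices `n - d·k ≤ n`). -/
noncomputable def dilatedCausalConv (K : ℕ) (d : ℤ) (h : ℕ → ℝ) (a : ℤ → ℝ) : ℤ → ℝ :=
  fun n => ∑ k ∈ Finset.range K, h k * a (n - d * (k : ℤ))

/-- The approximation coefficients of the causal multiresolution convolution:
`A 0 = x`, `A (j+1) = dilated causal conv of `A j` with dilation `2^j`. -/
noncomputable def multiresA (K : ℕ) (h0 : ℕ → ℝ) (x : ℤ → ℝ) : ℕ → ℤ → ℝ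
  | 0 => x
  | j + 1 => dilatedCausalConv K ((2 : ℤ) ^ j) h0 (multiresA K h0 x j)

open Set

theorem dilatedCausalConv_eqOn_Iic {K : ℕ} {d : ℤ} (hd : 0 ≤ d) (h : ℕ → ℝ) {a b : ℤ → ℝ}
    {t : ℤ} (hab : EqOn a b (Iic t)) :
    EqOn (dilatedCausalConv K d h a) (dilatedCausalConv K d h b) (Iic t) := by
  intro n (hn : n ≤ t)
  refine Finset.sum_congr rfl fun k _ => ?_
  have hshift : 0 ≤ d * (k : ℤ) := mul_nonneg hd k.cast_nonneg
  rw [hab (show n - d * k ≤ t by omega)]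

theorem multiresA_eqOn_Iic (K : ℕ) (h0 : ℕ → ℝ) {x x' : ℤ → ℝ} {t : ℤ}
    (hx : EqOn x x' (Iic t)) (j : ℕ) :
    EqOn (multiresA K h0 x j) (multiresA K h0 x' j) (Iic t) := by
  induction j with
  | zero => exact hx
  | succ j ih => exact dilatedCausalConv_eqOn_Iic (by positivity) h0 ih

/-- Causality of the multiresolution convolution with left zero-padding: if two inputs
agree on all indices up to `t`, then the resolution-fading memory vectors `z_t`
(the last approximation coefficient and the last detail coefficient at every level,
together with `x(t)` itself) agree; i.e. the output at time `t` depends only on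
`x(0:t)`. -/
theorem multires_causality (K : ℕ) (h0 h1 : ℕ → ℝ) (x x' : ℤ → ℝ) (t : ℤ)
    (hagree : ∀ n : ℤ, n ≤ t → x n = x' n) (J : ℕ) :
    (∀ j ≤ J, multiresA K h0 x j t = multiresA K h0 x' j t) ∧
    (∀ j < J, dilatedCausalConv K ((2 : ℤ) ^ j) h1 (multiresA K h0 x j) t
      = dilatedCausalConv K ((2 : ℤ) ^ j) h1 (multiresA K h0 x' j) t) ∧
    x t = x' t := by
  have hA (j : ℕ) := multiresA_eqOn_Iic K h0 (t := t) hagree j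
  refine ⟨fun j _ => hA j self_mem_Iic, fun j _ => ?_, hagree t le_rfl⟩
  exact dilatedCausalConv_eqOn_Iic (by positivity) h1 (hA j) self_mem_Iic
end
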